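/- arXiv:1611.04818 — 2 statements merged into one kernel-verified Lean document; each statement's English description precedes it below -/
import Mathlib

section
/- For the acquaintance vaccination model with a perfect vaccine, the post-vaccination threshold parameter can be written as R_v = η(p')·(1 − 2p' + p' p_N) where p' = p_S p_N and η depends on (p_S, p_N) only through p'; hence for fixed coverage (fixed p'), R_v is increasing in p_N, so R_v is minimised at (p_S,p_N)=(1,p') and maximised at (p_S,p_N)=(p',1), with R_v^best = (1−p')·R_v^worst. -/
/-- The post-vaccination threshold parameter for acquaintance vaccination with a
perfect vaccine:
`R_v = (μ_{D̃_U-1} + μ_{D_U} μ_S(U,U)) (p_S^U(1-p_N) + 1 - p_S^U) (1-p̃_V) p_G`,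
where `p_S^U = p_S(1-p_N)/(1-p_S p_N)`, `p̃_V = 1 - f_{D̃-1}(1-p_S p_N)`,
`μ_{D̃_U-1} = (1-p_S p_N) f'_{D̃-1}(1-p_S p_N)/(1-p̃_V)` and
`μ_{D_U} = (1-p_S p_N) f'_D(1-p_S p_N)/f_D(1-p_S p_N)`. -/
noncomputable def Rv (fD fDt1 : ℝ → ℝ) (muS pG pS pN : ℝ) : ℝ :=
  ((1 - pS * pN) * deriv fDt1 (1 - pS * pN) / (1 - (1 - fDt1 (1 - pS * pN)))
      + (1 - pS * pN) * deriv fD (1 - pS * pN) / fD (1 - pS * pN) * muS)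
    * ((pS * (1 - pN) / (1 - pS * pN)) * (1 - pN) + 1 - pS * (1 - pN) / (1 - pS * pN))
    * (1 - (1 - fDt1 (1 - pS * pN))) * pG

/-- `η(p') = f_{D̃-1}(1-p') p_G (f'_{D̃-1}(1-p')/f_{D̃-1}(1-p') + μ_S(U,U) f'_D(1-p')/f_D(1-p'))`. -/
noncomputable def eta (fD fDt1 : ℝ → ℝ) (muS pG p' : ℝ) : ℝ :=
  fDt1 (1 - p') * pG *
    (deriv fDt1 (1 - p') / fDt1 (1 - p') + muS * deriv fD (1 - p') / fD (1 - p'))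

/- Only the factor `1 - p_S^U p_N` sees `p_N` beyond `p' = p_S p_N`; its denominator `1 - p'`
cancels against the prefactor `1 - p'` of the mean excess degrees. -/
theorem Rv_eq_eta_mul {fD fDt1 : ℝ → ℝ} {muS pG pS pN p' : ℝ}
    (hp' : pS * pN = p') (h1 : p' ≠ 1)
    (hfD : fD (1 - p') ≠ 0) (hfDt1 : fDt1 (1 - p') ≠ 0) :
    Rv fD fDt1 muS pG pS pN = eta fD fDt1 muS pG p' * (1 - 2 * p' + p' * pN) := by
  have hunvacc : (1 : ℝ) - p' ≠ 0 := sub_ne_zero.mpr (Ne.symm h1)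
  have hfactor : pS * (1 - pN) / (1 - p') * (1 - pN) + 1 - pS * (1 - pN) / (1 - p')
      = (1 - 2 * p' + p' * pN) / (1 - p') := by
    field_simp
    linear_combination (pN - 1) * hp'
  unfold Rv eta
  rw [hp', hfactor, sub_sub_cancel]
  field_simp

theorem eta_pos {fD fDt1 : ℝ → ℝ} {muS pG p' : ℝ}
    (hfD : 0 < fD (1 - p')) (hfDt1 : 0 < fDt1 (1 - p'))
    (hdD : 0 ≤ deriv fD (1 - p')) (hdDt : 0 < deriv fDt1 (1 - p'))
    (hmuS : 0 ≤ muS) (hpG : 0 < pG) :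
    0 < eta fD fDt1 muS pG p' := by
  have hDt : 0 < deriv fDt1 (1 - p') / fDt1 (1 - p') := div_pos hdDt hfDt1
  have hD : 0 ≤ muS * deriv fD (1 - p') / fD (1 - p') := by positivity
  unfold eta
  positivity

theorem Rv_lt_Rv_of_lt {fD fDt1 : ℝ → ℝ} {muS pG pS₁ pN₁ pS₂ pN₂ p' : ℝ}
    (h₁ : pS₁ * pN₁ = p') (h₂ : pS₂ * pN₂ = p') (h0 : 0 < p') (h1 : p' ≠ 1)
    (hfD : fD (1 - p') ≠ 0) (hfDt1 : fDt1 (1 - p') ≠ 0) (heta : 0 < eta fD fDt1 muS pG p')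
    (hlt : pN₁ < pN₂) :
    Rv fD fDt1 muS pG pS₁ pN₁ < Rv fD fDt1 muS pG pS₂ pN₂ := by
  rw [Rv_eq_eta_mul h₁ h1 hfD hfDt1, Rv_eq_eta_mul h₂ h1 hfD hfDt1]
  gcongr

theorem acquaintance_perfect_vaccine_Rv_general (fD fDt1 : ℝ → ℝ) (muS pG pS pN p' : ℝ)
    (hp' : p' = pS * pN) (h0 : 0 < p') (h1 : p' < 1)
    (hfD : 0 < fD (1 - p')) (hfDt1 : 0 < fDt1 (1 - p'))
    (hdD : 0 ≤ deriv fD (1 - p')) (hdDt : 0 < deriv fDt1 (1 - p'))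
    (hmuS : 0 ≤ muS) (hpG : 0 < pG) :
    Rv fD fDt1 muS pG pS pN = eta fD fDt1 muS pG p' * (1 - 2 * p' + p' * pN) ∧
    (∀ pS₁ pN₁ pS₂ pN₂ : ℝ, pS₁ * pN₁ = p' → pS₂ * pN₂ = p' → pN₁ < pN₂ →
      Rv fD fDt1 muS pG pS₁ pN₁ < Rv fD fDt1 muS pG pS₂ pN₂) ∧
    Rv fD fDt1 muS pG 1 p' = (1 - p') * Rv fD fDt1 muS pG p' 1 := by
  have hp'1 : p' ≠ 1 := h1.ne
  have heta : 0 < eta fD fDt1 muS pG p' := eta_pos hfD hfDt1 hdD hdDt hmuS hpG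
  refine ⟨Rv_eq_eta_mul hp'.symm hp'1 hfD.ne' hfDt1.ne', ?_, ?_⟩
  · intro pS₁ pN₁ pS₂ pN₂ h₁ h₂ hlt
    exact Rv_lt_Rv_of_lt h₁ h₂ h0 hp'1 hfD.ne' hfDt1.ne' heta hlt
  · rw [Rv_eq_eta_mul (one_mul p') hp'1 hfD.ne' hfDt1.ne',
      Rv_eq_eta_mul (mul_one p') hp'1 hfD.ne' hfDt1.ne']
    ring

/-- For acquaintance vaccination with a perfect vaccine,
`R_v = η(p')(1 - 2p' + p' p_N)` with `p' = p_S p_N`, where `η` depends on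
`(p_S,p_N)` only through `p'`; hence for fixed coverage `p'`, `R_v` is
increasing in `p_N`, so it is minimised at `(p_S,p_N) = (1,p')` and maximised
at `(p_S,p_N) = (p',1)`, with `R_v^best = (1-p') R_v^worst`. -/
theorem acquaintance_perfect_vaccine_Rv (fD fDt1 : ℝ → ℝ) (muS pG pS pN p' : ℝ)
    (hp' : p' = pS * pN) (h0 : 0 < p') (h1 : p' < 1)
    (hS : pS ≤ 1) (hN : pN ≤ 1)
    (hfD : 0 < fD (1 - p')) (hfDt1 : 0 < fDt1 (1 - p'))
    (hdD : 0 ≤ deriv fD (1 - p')) (hdDt : 0 < deriv fDt1 (1 - p'))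
    (hmuS : 0 ≤ muS) (hpG : 0 < pG) :
    Rv fD fDt1 muS pG pS pN = eta fD fDt1 muS pG p' * (1 - 2 * p' + p' * pN) ∧
    (∀ pS₁ pN₁ pS₂ pN₂ : ℝ, pS₁ * pN₁ = p' → pS₂ * pN₂ = p' → pN₁ < pN₂ →
      Rv fD fDt1 muS pG pS₁ pN₁ < Rv fD fDt1 muS pG pS₂ pN₂) ∧
    Rv fD fDt1 muS pG 1 p' = (1 - p') * Rv fD fDt1 muS pG p' 1 :=
  acquaintance_perfect_vaccine_Rv_general fD fDt1 muS pG pS pN p' hp' h0 h1 hfD hfDt1 hdD hdDt hmuS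
    hpG
end

section
/- With an all-or-nothing vaccine of efficacy ε administered to v of n household members, the mean number of global infections from a non-initial infected household satisfies μ_{n,v} = Σ_{k=0}^{v} C(v,k) ε^k (1−ε)^{v−k} ((n−k)/n) E[C̃^{(n−k)}]; and if E[C̃^{(n)}] is nondecreasing in n, then μ_{n,v} is nonincreasing in v for fixed n. -/
/-! Write `μ_{n,v}` as the mean of the antitone function `g k = ((n - k) / n) E[C̃^{(n-k)}]` of
`K ~ Binomial(v, ε)`. Pascal's rule (conditioning on the last vaccination) gives
`μ_{n,v+1} = (1 - ε) μ_{n,v} + ε E[g (K + 1)]`, and `g (K + 1) ≤ g K`. -/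

open Finset

section BinomialExpectation

variable {R : Type*} [CommRing R]

/-- Summed over pairs `(successes, failures)`, so that no truncated subtraction occurs. -/
def binomialExpectation (v : ℕ) (p : R) (g : ℕ → R) : R :=
  ∑ ij ∈ antidiagonal v, (v.choose ij.1 : R) * (p ^ ij.1 * (1 - p) ^ ij.2 * g ij.1)

theorem binomialExpectation_eq_sum_range (v : ℕ) (p : R) (g : ℕ → R) :
    binomialExpectation v p g =
      ∑ k ∈ range (v + 1), (v.choose k : R) * p ^ k * (1 - p) ^ (v - k) * g k := by
  rw [binomialExpectation, Nat.sum_antidiagonal_eq_sum_range_succ_mk]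
  simp only [mul_assoc]

theorem binomialExpectation_succ (v : ℕ) (p : R) (g : ℕ → R) :
    binomialExpectation (v + 1) p g =
      (1 - p) * binomialExpectation v p g + p * binomialExpectation v p (fun k => g (k + 1)) := by
  rw [binomialExpectation, sum_antidiagonal_choose_succ_mul
    (fun i j => p ^ i * (1 - p) ^ j * g i), binomialExpectation, binomialExpectation,
    mul_sum, mul_sum]
  congr 1
  · refine sum_congr rfl fun ij _ => ?_
    ring
  · refine sum_congr rfl fun ij hij => ?_
    rw [Nat.choose_symm_of_eq_add (mem_antidiagonal.mp hij).symm]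
    ring

variable [PartialOrder R] [IsOrderedRing R] {p : R}

theorem binomialExpectation_mono (hp0 : 0 ≤ p) (hp1 : p ≤ 1) (v : ℕ) {g h : ℕ → R}
    (hgh : g ≤ h) : binomialExpectation v p g ≤ binomialExpectation v p h := by
  refine sum_le_sum fun ij _ => mul_le_mul_of_nonneg_left ?_ (Nat.cast_nonneg _)
  have hq : 0 ≤ 1 - p := sub_nonneg.mpr hp1
  exact mul_le_mul_of_nonneg_left (hgh _) (mul_nonneg (pow_nonneg hp0 _) (pow_nonneg hq _))

theorem binomialExpectation_succ_le (hp0 : 0 ≤ p) (hp1 : p ≤ 1) (v : ℕ) {g : ℕ → R}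
    (hg : Antitone g) : binomialExpectation (v + 1) p g ≤ binomialExpectation v p g := by
  have hshift : binomialExpectation v p (fun k => g (k + 1)) ≤ binomialExpectation v p g :=
    binomialExpectation_mono hp0 hp1 v fun k => hg k.le_succ
  rw [binomialExpectation_succ]
  linear_combination mul_le_mul_of_nonneg_left hshift hp0

end BinomialExpectation

theorem antitone_susceptibleFraction_mul {E : ℕ → ℝ} (hEnn : ∀ k, 0 ≤ E k) (hEmono : Monotone E)
    (n : ℕ) : Antitone fun k => ((n - k : ℕ) : ℝ) / (n : ℝ) * E (n - k) := by
  have hmono : Monotone fun m : ℕ => (m : ℝ) / n * E m :=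
    Monotone.mul (fun _ _ h => by gcongr) hEmono (fun _ => by positivity) hEnn
  exact hmono.comp_antitone fun _ _ h => Nat.sub_le_sub_left h n

theorem all_or_nothing_mean_nonincreasing_general (n : ℕ) (ε : ℝ)
    (hε0 : 0 ≤ ε) (hε1 : ε ≤ 1)
    (E : ℕ → ℝ) (hEnn : ∀ k, 0 ≤ E k) (hEmono : Monotone E)
    (v : ℕ) :
    ∑ k ∈ Finset.range (v + 2),
        ((v + 1).choose k : ℝ) * ε ^ k * (1 - ε) ^ (v + 1 - k) *
          (((n - k : ℕ) : ℝ) / (n : ℝ)) * E (n - k)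
      ≤ ∑ k ∈ Finset.range (v + 1),
          (v.choose k : ℝ) * ε ^ k * (1 - ε) ^ (v - k) *
            (((n - k : ℕ) : ℝ) / (n : ℝ)) * E (n - k) := by
  have h := binomialExpectation_succ_le hε0 hε1 v (antitone_susceptibleFraction_mul hEnn hEmono n)
  simpa only [binomialExpectation_eq_sum_range, mul_assoc] using h

/-- With an all-or-nothing vaccine of efficacy `ε` given to `v` of
`n` household members, the mean number of global infections from a non-initial
infected household is
`μ_{n,v} = Σ_{k=0}^v C(v,k) ε^k (1-ε)^{v-k} ((n-k)/n) E[C̃^{(n-k)}]`;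
if `E[C̃^{(n)}]` is nonnegative and nondecreasing in `n`, then `μ_{n,v}` is
nonincreasing in `v` for fixed `n`: `μ_{n,v+1} ≤ μ_{n,v}` for `0 ≤ v ≤ n-1`. -/
theorem all_or_nothing_mean_nonincreasing (n : ℕ) (hn : 1 ≤ n) (ε : ℝ)
    (hε0 : 0 ≤ ε) (hε1 : ε ≤ 1)
    (E : ℕ → ℝ) (hEnn : ∀ k, 0 ≤ E k) (hEmono : Monotone E)
    (v : ℕ) (hv : v + 1 ≤ n) :
    ∑ k ∈ Finset.range (v + 2),
        ((v + 1).choose k : ℝ) * ε ^ k * (1 - ε) ^ (v + 1 - k) *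
          (((n - k : ℕ) : ℝ) / (n : ℝ)) * E (n - k)
      ≤ ∑ k ∈ Finset.range (v + 1),
          (v.choose k : ℝ) * ε ^ k * (1 - ε) ^ (v - k) *
            (((n - k : ℕ) : ℝ) / (n : ℝ)) * E (n - k) :=
  all_or_nothing_mean_nonincreasing_general n ε hε0 hε1 E hEnn hEmono v
end
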